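/- arXiv:1712.04600 — 4 statements merged into one kernel-verified Lean document; each statement's English description precedes it below -/
import Mathlib

section
/- If Q, P are d×d complex matrices satisfying Qᵀ P − Pᵀ Q = 0 and Q* P − P* Q = 2i·I, then the matrix P Q⁻¹ is complex-symmetric, i.e., (P Q⁻¹)ᵀ = P Q⁻¹. -/
open Matrix

theorem PQinv_symmetric (d : ℕ) (Q P : Matrix (Fin d) (Fin d) ℂ)
    (h1 : Qᵀ * P - Pᵀ * Q = 0)
    (h2 : Qᴴ * P - Pᴴ * Q = (2 * Complex.I) • (1 : Matrix (Fin d) (Fin d) ℂ)) :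
    (P * Q⁻¹)ᵀ = P * Q⁻¹ := by
  have hQ : IsUnit Q := by
    rw [← Matrix.mulVec_injective_iff_isUnit]
    have key : ∀ v, Q *ᵥ v = 0 → v = 0 := by
      intro v hv
      have := congrArg (fun M => star v ⬝ᵥ (M *ᵥ v)) h2
      simp only [Matrix.sub_mulVec, Matrix.smul_mulVec, Matrix.one_mulVec,
        dotProduct_sub, dotProduct_smul] at this
      have e1 : star v ⬝ᵥ ((Qᴴ * P) *ᵥ v) = star (Q *ᵥ v) ⬝ᵥ (P *ᵥ v) := by
        rw [← Matrix.mulVec_mulVec, Matrix.star_mulVec, ← Matrix.dotProduct_mulVec]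
      have e2 : star v ⬝ᵥ ((Pᴴ * Q) *ᵥ v) = star (P *ᵥ v) ⬝ᵥ (Q *ᵥ v) := by
        rw [← Matrix.mulVec_mulVec, Matrix.star_mulVec, ← Matrix.dotProduct_mulVec]
      rw [e1, e2, hv] at this
      simp only [star_zero, dotProduct_zero, zero_dotProduct, sub_zero, zero_sub] at this
      have hvv : star v ⬝ᵥ v = 0 := by
        have h2I : (2 * Complex.I) ≠ 0 := by simp [Complex.I_ne_zero]
        field_simp at this
        exact (smul_eq_zero.mp this.symm).resolve_left h2I
      ext i
      have hsum : ∑ j, (star (v j) * v j).re = 0 := by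
        have := congrArg Complex.re hvv
        simpa [dotProduct, Complex.re_sum] using this
      have hnn : ∀ j, 0 ≤ (star (v j) * v j).re := by
        intro j
        simp [Complex.mul_re, Complex.star_def]
        nlinarith [sq_nonneg (v j).re, sq_nonneg (v j).im]
      have := (Finset.sum_eq_zero_iff_of_nonneg (fun j _ => hnn j)).mp hsum i (Finset.mem_univ i)
      simp [Complex.ext_iff, Complex.mul_re, Complex.star_def] at this ⊢
      constructor <;> nlinarith [this, sq_nonneg ((v i).re), sq_nonneg ((v i).im)]
    intro x y hxy
    have hz : Q *ᵥ (x - y) = 0 := by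
      rw [Matrix.mulVec_sub, hxy, sub_self]
    have := key _ hz
    exact sub_eq_zero.mp this
  have hQdet : IsUnit Q.det := (Matrix.isUnit_iff_isUnit_det Q).mp hQ
  have hQTdet : IsUnit Qᵀ.det := by rwa [Matrix.det_transpose]
  have h1' : Qᵀ * P = Pᵀ * Q := by rwa [sub_eq_zero] at h1
  calc (P * Q⁻¹)ᵀ = (Qᵀ)⁻¹ * Pᵀ := by rw [Matrix.transpose_mul, Matrix.transpose_nonsing_inv]
    _ = (Qᵀ)⁻¹ * (Pᵀ * Q) * Q⁻¹ := by
        rw [mul_assoc, mul_assoc, Matrix.mul_nonsing_inv _ hQdet, mul_one]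
    _ = (Qᵀ)⁻¹ * (Qᵀ * P) * Q⁻¹ := by rw [h1']
    _ = P * Q⁻¹ := by rw [← mul_assoc, Matrix.nonsing_inv_mul _ hQTdet, one_mul]
end

section
/- If Q, P are d×d complex matrices satisfying Qᵀ P − Pᵀ Q = 0 and Q* P − P* Q = 2i·I, then the imaginary part of P Q⁻¹ is positive definite; in fact Im(P Q⁻¹) = (Q Q*)⁻¹. -/
open Matrix ComplexOrder

theorem PQinv_im_posDef (d : ℕ) (Q P : Matrix (Fin d) (Fin d) ℂ)
    (h1 : Qᵀ * P - Pᵀ * Q = 0)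
    (h2 : Qᴴ * P - Pᴴ * Q = (2 * Complex.I) • (1 : Matrix (Fin d) (Fin d) ℂ)) :
    ((2 * Complex.I)⁻¹ • (P * Q⁻¹ - (P * Q⁻¹).map (starRingEnd ℂ))).PosDef ∧
    (2 * Complex.I)⁻¹ • (P * Q⁻¹ - (P * Q⁻¹).map (starRingEnd ℂ)) = (Q * Qᴴ)⁻¹ := by
  have h2i : (2 * Complex.I) ≠ 0 := by
    simp [Complex.I_ne_zero]
  -- Q is invertible
  have hQ : IsUnit Q := by
    rw [Matrix.isUnit_iff_isUnit_det, isUnit_iff_ne_zero]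
    intro hdet
    obtain ⟨v, hv, hQv⟩ := (Matrix.exists_mulVec_eq_zero_iff).2 hdet
    have := congrArg (fun M => star v ⬝ᵥ M.mulVec v) h2
    simp only [Matrix.sub_mulVec, dotProduct_sub, Matrix.smul_mulVec,
      Matrix.one_mulVec, dotProduct_smul, ← Matrix.mulVec_mulVec] at this
    rw [hQv, Matrix.mulVec_zero, dotProduct_zero, Matrix.dotProduct_mulVec,
      Matrix.vecMul_conjTranspose, star_star, hQv] at this
    simp only [star_zero, zero_dotProduct, sub_zero, smul_eq_mul] at this
    have hvv : star v ⬝ᵥ v = 0 := by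
      rcases mul_eq_zero.mp this.symm with h | h
      · exact absurd h h2i
      · exact h
    exact hv ((dotProduct_star_self_eq_zero).mp hvv)
  have hQd : IsUnit Q.det := Matrix.isUnit_iff_isUnit_det Q |>.mp hQ
  have hQHd : IsUnit Qᴴ.det := by
    rwa [Matrix.det_conjTranspose, isUnit_star]
  -- PQ⁻¹ is symmetric
  have hsym : (P * Q⁻¹)ᵀ = P * Q⁻¹ := by
    have h1' : Qᵀ * P = Pᵀ * Q := by
      have := sub_eq_zero.mp h1; exact this
    rw [Matrix.transpose_mul, Matrix.transpose_nonsing_inv]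
    calc Qᵀ⁻¹ * Pᵀ = Qᵀ⁻¹ * (Pᵀ * Q) * Q⁻¹ := by
          rw [Matrix.mul_assoc (Qᵀ⁻¹) _ _, Matrix.mul_assoc Pᵀ Q _,
            Matrix.mul_nonsing_inv _ hQd, Matrix.mul_one]
      _ = Qᵀ⁻¹ * (Qᵀ * P) * Q⁻¹ := by rw [h1']
      _ = P * Q⁻¹ := by
          rw [← Matrix.mul_assoc, Matrix.nonsing_inv_mul _ (by rwa [Matrix.det_transpose]),
            Matrix.one_mul]
  -- the conjugate of PQ⁻¹ is its conjugate transpose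
  have hmap : (P * Q⁻¹).map (starRingEnd ℂ) = (P * Q⁻¹)ᴴ := by
    ext i j
    rw [Matrix.map_apply, Matrix.conjTranspose_apply]
    conv_lhs => rw [← hsym]
    rw [Matrix.transpose_apply]
    rfl
  -- the key identity
  have hkey : P * Q⁻¹ - (P * Q⁻¹)ᴴ = (2 * Complex.I) • (Q * Qᴴ)⁻¹ := by
    have h2' : Qᴴ * P = Pᴴ * Q + (2 * Complex.I) • (1 : Matrix (Fin d) (Fin d) ℂ) := by
      rw [← h2]; abel
    have hBH : (P * Q⁻¹)ᴴ = Qᴴ⁻¹ * Pᴴ := by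
      rw [Matrix.conjTranspose_mul, Matrix.conjTranspose_nonsing_inv]
    have hB : P * Q⁻¹ = Qᴴ⁻¹ * Pᴴ + (2 * Complex.I) • (Qᴴ⁻¹ * Q⁻¹) := by
      calc P * Q⁻¹ = Qᴴ⁻¹ * (Qᴴ * P) * Q⁻¹ := by
            rw [← Matrix.mul_assoc, Matrix.nonsing_inv_mul _ hQHd, Matrix.one_mul]
        _ = Qᴴ⁻¹ * (Pᴴ * Q + (2 * Complex.I) • 1) * Q⁻¹ := by rw [h2']
        _ = Qᴴ⁻¹ * (Pᴴ * Q) * Q⁻¹ + (2 * Complex.I) • (Qᴴ⁻¹ * Q⁻¹) := by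
            rw [Matrix.mul_add, Matrix.add_mul]
            simp only [Matrix.mul_smul, Matrix.smul_mul, Matrix.mul_one]
        _ = Qᴴ⁻¹ * Pᴴ + (2 * Complex.I) • (Qᴴ⁻¹ * Q⁻¹) := by
            rw [Matrix.mul_assoc (Qᴴ⁻¹) (Pᴴ * Q) _, Matrix.mul_assoc Pᴴ Q _,
              Matrix.mul_nonsing_inv _ hQd, Matrix.mul_one]
    rw [hBH, hB, Matrix.mul_inv_rev, ← Matrix.conjTranspose_nonsing_inv,
      Matrix.conjTranspose_nonsing_inv]
    abel
  have heq : (2 * Complex.I)⁻¹ • (P * Q⁻¹ - (P * Q⁻¹).map (starRingEnd ℂ)) = (Q * Qᴴ)⁻¹ := by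
    rw [hmap, hkey, smul_smul, inv_mul_cancel₀ h2i, one_smul]
  refine ⟨?_, heq⟩
  rw [heq]
  -- (Q Qᴴ)⁻¹ is positive definite
  have hpos : (Q * Qᴴ).PosDef := by
    refine Matrix.PosDef.of_dotProduct_mulVec_pos (Matrix.isHermitian_mul_conjTranspose_self Q) fun x hx => ?_
    have hsd := Matrix.posSemidef_self_mul_conjTranspose Q
    rcases lt_or_eq_of_le (hsd.dotProduct_mulVec_nonneg x) with h | h
    · exact h
    · exfalso
      have h0 : (Q * Qᴴ) *ᵥ x = 0 := (hsd.dotProduct_mulVec_zero_iff x).mp h.symm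
      have : x = 0 := by
        have hu : IsUnit (Q * Qᴴ) := by
          rw [Matrix.isUnit_iff_isUnit_det, Matrix.det_mul]
          exact hQd.mul hQHd
        have := Matrix.mulVec_injective_iff_isUnit.mpr hu
        have := this (a₁ := x) (a₂ := 0) (by simpa using h0)
        simpa using this
      exact hx this
  exact hpos.inv
end

section
/- Along solutions of the reduced semiclassical system q̇ = p/m, ṗ = −∇_q V^{(n)}_ℏ(q,ℬ), 𝒜̇ = −(1/m)(𝒜² − ½(ℬ^{(n)}Λ^{(n)}ℬ + ℬΛ^{(n)}ℬ^{(n)})) − D²V(q), ℬ̇^{(n)} = −(𝒜ℬ^{(n)} + ℬ^{(n)}𝒜)/m, the Hamiltonian H̄^{(n)}_ℏ = p²/(2m) + (ℏ/(4m)) tr((ℬ^{(n)})⁻¹(𝒜² + ℬ²)) + V(q) + (ℏ/4) tr((ℬ^{(n)})⁻¹ D²V(q)) is conserved, in the one-dimensional case d = 1. -/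
theorem reduced_semiclassical_energy_conserved
    (m ℏ : ℝ) (hm : 0 < m) (hℏ : 0 < ℏ) (n : ℕ)
    (V : ℝ → ℝ) (hV : ContDiff ℝ 3 V)
    (q p A B : ℝ → ℝ) (hBpos : ∀ t, 0 < B t)
    (hq : ∀ t, HasDerivAt q (p t / m) t)
    (hp : ∀ t, HasDerivAt p
      (-(deriv V (q t) + ℏ / 4 * (2 * (n : ℝ) + 1) * (B t)⁻¹
          * deriv (deriv (deriv V)) (q t))) t)
    (hA : ∀ t, HasDerivAt A
      (-(A t ^ 2 - B t ^ 2) / m - deriv (deriv V) (q t)) t)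
    (hB : ∀ t, HasDerivAt B (-(2 * A t * B t) / m) t) :
    ∀ t, p t ^ 2 / (2 * m)
        + ℏ / (4 * m) * (2 * (n : ℝ) + 1) * (B t)⁻¹ * (A t ^ 2 + B t ^ 2)
        + V (q t) + ℏ / 4 * (2 * (n : ℝ) + 1) * (B t)⁻¹ * deriv (deriv V) (q t)
      = p 0 ^ 2 / (2 * m)
        + ℏ / (4 * m) * (2 * (n : ℝ) + 1) * (B 0)⁻¹ * (A 0 ^ 2 + B 0 ^ 2)
        + V (q 0) + ℏ / 4 * (2 * (n : ℝ) + 1) * (B 0)⁻¹ * deriv (deriv V) (q 0) := by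
  have h3 : ContDiff ℝ (2 + 1 : ℕ) V := by exact_mod_cast hV
  have hV2 : ContDiff ℝ (1 + 1 : ℕ) (deriv V) := by
    exact_mod_cast (contDiff_succ_iff_deriv.mp h3).2.2
  have hV3 : ContDiff ℝ (0 + 1 : ℕ) (deriv (deriv V)) := by
    exact_mod_cast (contDiff_succ_iff_deriv.mp hV2).2.2
  have hVd : Differentiable ℝ V := h3.differentiable (by norm_num)
  have hVd2 : Differentiable ℝ (deriv (deriv V)) := hV3.differentiable (by norm_num)
  set E : ℝ → ℝ := fun t => p t ^ 2 / (2 * m)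
        + ℏ / (4 * m) * (2 * (n : ℝ) + 1) * (B t)⁻¹ * (A t ^ 2 + B t ^ 2)
        + V (q t) + ℏ / 4 * (2 * (n : ℝ) + 1) * (B t)⁻¹ * deriv (deriv V) (q t)
    with hE
  have key : ∀ t, HasDerivAt E 0 t := by
    intro t
    have hBne : B t ≠ 0 := (hBpos t).ne'
    have hmne : m ≠ 0 := hm.ne'
    have h1 : HasDerivAt (fun t => p t ^ 2 / (2 * m))
        ((2 * p t ^ 1 * (-(deriv V (q t) + ℏ / 4 * (2 * (n : ℝ) + 1) * (B t)⁻¹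
          * deriv (deriv (deriv V)) (q t)))) / (2 * m)) t := ((hp t).pow 2).div_const _
    have hBinv : HasDerivAt (fun t => (B t)⁻¹)
        (-(-(2 * A t * B t) / m) / (B t) ^ 2) t := (hB t).inv hBne
    have h2 : HasDerivAt (fun t => ℏ / (4 * m) * (2 * (n : ℝ) + 1) * (B t)⁻¹
          * (A t ^ 2 + B t ^ 2))
        (ℏ / (4 * m) * (2 * (n : ℝ) + 1) * (-(-(2 * A t * B t) / m) / (B t) ^ 2)
            * (A t ^ 2 + B t ^ 2)
          + ℏ / (4 * m) * (2 * (n : ℝ) + 1) * (B t)⁻¹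
            * (2 * A t ^ 1 * (-(A t ^ 2 - B t ^ 2) / m - deriv (deriv V) (q t))
              + 2 * B t ^ 1 * (-(2 * A t * B t) / m))) t := by
      exact ((hBinv.const_mul _).mul (((hA t).pow 2).add ((hB t).pow 2)))
    have h3' : HasDerivAt (fun t => V (q t)) (deriv V (q t) * (p t / m)) t :=
      (hVd (q t)).hasDerivAt.comp t (hq t)
    have h4 : HasDerivAt (fun t => ℏ / 4 * (2 * (n : ℝ) + 1) * (B t)⁻¹
          * deriv (deriv V) (q t))
        (ℏ / 4 * (2 * (n : ℝ) + 1) * (-(-(2 * A t * B t) / m) / (B t) ^ 2)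
            * deriv (deriv V) (q t)
          + ℏ / 4 * (2 * (n : ℝ) + 1) * (B t)⁻¹
            * (deriv (deriv (deriv V)) (q t) * (p t / m))) t := by
      exact (hBinv.const_mul _).mul ((hVd2 (q t)).hasDerivAt.comp t (hq t))
    have := ((h1.add h2).add h3').add h4
    refine this.congr_deriv ?_
    field_simp
    ring
  have hconst : ∀ t, E t = E 0 := by
    intro t
    have := is_const_of_deriv_eq_zero (fun t => (key t).differentiableAt)
      (fun t => (key t).deriv) t 0
    exact this
  exact hconst
end

section
/- The quantity 𝒩_ℏ(ℬ, δ) = √((πℏ)^d / det ℬ) · exp(−2δ/ℏ) is conserved along solutions of the system ℬ̇ = −(𝒜ℬ + ℬ𝒜)/m, δ̇ = (ℏ/(2m)) tr 𝒜, where 𝒜(t), ℬ(t) are symmetric d×d real matrices with ℬ(t) positive definite. -/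
open Matrix

/-- Jacobi's formula, raw form: the derivative of the determinant of a matrix-valued
function is the sum over columns of determinants with one column differentiated. -/
theorem det_hasDerivAt' {d : ℕ} (M : ℝ → Matrix (Fin d) (Fin d) ℝ)
    (M' : Matrix (Fin d) (Fin d) ℝ) (t : ℝ)
    (h : ∀ i j, HasDerivAt (fun s => M s i j) (M' i j) t) :
    HasDerivAt (fun s => (M s).det)
      (∑ j, ((M t).updateCol j (fun i => M' i j)).det) t := by
  have key : ∀ σ : Equiv.Perm (Fin d),
      HasDerivAt (fun s => ∏ x, M s (σ x) x)
        (∑ j, (∏ x ∈ Finset.univ.erase j, M t (σ x) x) • M' (σ j) j) t :=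
    fun σ => HasDerivAt.fun_finsetProd (fun j _ => h (σ j) j)
  have main : HasDerivAt (fun s => (M s).det)
      (∑ σ : Equiv.Perm (Fin d), (Equiv.Perm.sign σ : ℤ) •
        ∑ j, (∏ x ∈ Finset.univ.erase j, M t (σ x) x) • M' (σ j) j) t := by
    have : ∀ s, (M s).det
        = ∑ σ : Equiv.Perm (Fin d), (Equiv.Perm.sign σ : ℤ) • ∏ x, M s (σ x) x :=
      fun s => Matrix.det_apply (M s)
    simp only [this]
    exact HasDerivAt.fun_sum fun σ _ => (key σ).fun_const_smul _
  convert main using 1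
  simp only [Matrix.det_apply]
  rw [Finset.sum_comm]
  refine Finset.sum_congr rfl fun σ _ => ?_
  rw [Finset.smul_sum]
  refine Finset.sum_congr rfl fun j _ => ?_
  congr 1
  have : ∏ x, (M t).updateCol j (fun i => M' i j) (σ x) x
      = M' (σ j) j * ∏ x ∈ Finset.univ.erase j, M t (σ x) x := by
    rw [← Finset.mul_prod_erase Finset.univ _ (Finset.mem_univ j)]
    congr 1
    · simp [Matrix.updateCol_apply]
    · exact Finset.prod_congr rfl fun x hx => by
        simp [Matrix.updateCol_apply, Finset.ne_of_mem_erase hx]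
  rw [this, smul_eq_mul, mul_comm]

/-- Jacobi's formula: derivative of the determinant via the adjugate. -/
theorem det_hasDerivAt {d : ℕ} (M : ℝ → Matrix (Fin d) (Fin d) ℝ)
    (M' : Matrix (Fin d) (Fin d) ℝ) (t : ℝ)
    (h : ∀ i j, HasDerivAt (fun s => M s i j) (M' i j) t) :
    HasDerivAt (fun s => (M s).det) (((M t).adjugate * M').trace) t := by
  have := det_hasDerivAt' M M' t h
  convert this using 1
  rw [Matrix.trace]
  refine Finset.sum_congr rfl fun j _ => ?_
  rw [Matrix.diag_apply, Matrix.mul_apply]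
  have := Matrix.cramer_eq_adjugate_mulVec (M t) (fun i => M' i j)
  have hj := congrFun this j
  rw [Matrix.cramer_apply] at hj
  rw [hj, Matrix.mulVec, dotProduct]

theorem norm_quantity_conserved (d : ℕ) (m ℏ : ℝ) (hm : 0 < m) (hℏ : 0 < ℏ)
    (A B : ℝ → Matrix (Fin d) (Fin d) ℝ) (δ : ℝ → ℝ)
    (hAsymm : ∀ t, (A t).IsSymm) (hBsymm : ∀ t, (B t).IsSymm)
    (hBpos : ∀ t, (B t).PosDef)
    (hB : ∀ (i j : Fin d) (t : ℝ),
      HasDerivAt (fun s => B s i j) ((-(1 / m)) • (A t * B t + B t * A t) i j) t)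
    (hδ : ∀ t, HasDerivAt δ (ℏ / (2 * m) * (A t).trace) t) :
    ∀ t, Real.sqrt ((Real.pi * ℏ) ^ d / (B t).det) * Real.exp (-2 * δ t / ℏ)
       = Real.sqrt ((Real.pi * ℏ) ^ d / (B 0).det) * Real.exp (-2 * δ 0 / ℏ) := by
  have hm' : (m : ℝ) ≠ 0 := ne_of_gt hm
  have hℏ' : (ℏ : ℝ) ≠ 0 := ne_of_gt hℏ
  -- derivative of det B
  have hdet : ∀ t, HasDerivAt (fun s => (B s).det)
      ((-(2 / m)) * (A t).trace * (B t).det) t := by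
    intro t
    have h1 := det_hasDerivAt B ((-(1 / m)) • (A t * B t + B t * A t)) t
      (fun i j => hB i j t)
    convert h1 using 1
    rw [Matrix.mul_smul, Matrix.trace_smul, Matrix.mul_add, Matrix.trace_add,
      ← Matrix.mul_assoc, ← Matrix.mul_assoc,
      Matrix.trace_mul_cycle (B t).adjugate (A t) (B t),
      Matrix.mul_adjugate, Matrix.adjugate_mul,
      Matrix.smul_mul, Matrix.one_mul, Matrix.trace_smul]
    simp only [smul_eq_mul]
    ring
  -- the conserved auxiliary quantity
  set g : ℝ → ℝ := fun t => (B t).det * Real.exp (4 * δ t / ℏ) with hg_def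
  have hg : ∀ t, HasDerivAt g 0 t := by
    intro t
    have hexp : HasDerivAt (fun s => Real.exp (4 * δ s / ℏ))
        (Real.exp (4 * δ t / ℏ) * (4 * (ℏ / (2 * m) * (A t).trace) / ℏ)) t :=
      (((hδ t).const_mul 4).div_const ℏ).exp
    have := (hdet t).fun_mul hexp
    refine this.congr_deriv ?_
    rw [show 4 * (ℏ / (2 * m) * (A t).trace) / ℏ = 2 / m * (A t).trace by field_simp <;> ring]
    ring
  have hconst : ∀ t, g t = g 0 :=
    fun t => is_const_of_deriv_eq_zero
      (fun x => (hg x).differentiableAt) (fun x => (hg x).deriv) t 0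
  -- rewrite the quantity in terms of g
  have key : ∀ t, Real.sqrt ((Real.pi * ℏ) ^ d / (B t).det) * Real.exp (-2 * δ t / ℏ)
      = Real.sqrt ((Real.pi * ℏ) ^ d / g t) := by
    intro t
    have hdetpos := (hBpos t).det_pos
    have h1 : (Real.pi * ℏ) ^ d / g t
        = ((Real.pi * ℏ) ^ d / (B t).det) * Real.exp (-(4 * δ t / ℏ)) := by
      rw [hg_def, Real.exp_neg]
      field_simp
    rw [h1, Real.sqrt_mul (by positivity)]
    congr 1
    rw [← Real.exp_half]
    congr 1
    ring
  intro t
  rw [key t, key 0, hconst t]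
end
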